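/- Assume α₁, …, α_m are nonzero rationals, and let D be a positive integer such that D·P(z) ∈ ℤ[z] and D·α_j·q^k ∈ ℤ for all 1 ≤ j ≤ m and 0 ≤ k < d. For integers 0 ≤ Sl ≤ n set w_{l,n}(x) = Dⁿ · q₁^{S·l(l+1)/2} · q₂^{d·n(n+1)/2} · v_{l,n}(x). Then there exists a constant C > 0 depending only on q, P, D, m, the α_j and the s_j such that for all 0 ≤ Sl ≤ n the height (maximum of the absolute values of the coefficients) of w_{l,n} satisfies H(w_{l,n}) ≤ |q₁|^{d·n²/2 + S·l²/2 + C(n+1)}. -/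

import Mathlib

open scoped BigOperators Classical
open Finset

noncomputable section

/-- The value `P(q^n)` viewed as a complex number. -/
def Pq (q : ℚ) (P : Polynomial ℚ) (n : ℕ) : ℂ := ((P.eval (q ^ n) : ℚ) : ℂ)

/-- The product `∏_{k=1}^n P(q^k)`. -/
def prodP (q : ℚ) (P : Polynomial ℚ) (n : ℕ) : ℂ := ∏ k ∈ Finset.range n, Pq q P (k + 1)

/-- The entire function `f(z) = ∑_{n≥0} zⁿ / ∏_{k=1}^n P(q^k)`. -/
def fC (q : ℚ) (P : Polynomial ℚ) : ℂ → ℂ := fun z => ∑' n : ℕ, z ^ n / prodP q P n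

/-- The linear form `u_n(x) = ∑_{j,k,σ} σ!·binom(n,σ)·(α_j q^k)^{n−σ} x_{j,k,σ}`, where
`σ!·binom(n,σ)` is written as the falling factorial `∏_{i<σ} (n−i)` (valid for all `n ∈ ℤ`). -/
def useq (q : ℚ) {m : ℕ} (d : ℕ) (α : Fin m → ℂ) (s : Fin m → ℕ)
    (x : Fin m → Fin d → ℕ → ℂ) (n : ℤ) : ℂ :=
  ∑ j : Fin m, ∑ k : Fin d, ∑ σ ∈ Finset.range (s j),
    (∏ i ∈ Finset.range σ, ((n : ℂ) - (i : ℂ))) *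
      (α j * (q : ℂ) ^ (k : ℕ)) ^ (n - (σ : ℤ)) * x j k σ

/-- The linear form `v_n(x) = x₀ ∏_{k=1}^n P(q^k) + ∑_{l=0}^n u_l(x) ∏_{k=l+1}^n P(q^k)`. -/
def vseq (q : ℚ) (P : Polynomial ℚ) {m : ℕ} (d : ℕ) (α : Fin m → ℂ) (s : Fin m → ℕ)
    (x0 : ℂ) (x : Fin m → Fin d → ℕ → ℂ) (n : ℕ) : ℂ :=
  x0 * prodP q P n +
    ∑ l ∈ Finset.range (n + 1), useq q d α s x (l : ℤ) * ∏ k ∈ Finset.Icc (l + 1) n, Pq q P k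

/-- `v_n(x)` extended to a two-sided sequence (by `0` at negative indices; the values at
negative indices are irrelevant for the statements below). -/
def vext (q : ℚ) (P : Polynomial ℚ) {m : ℕ} (d : ℕ) (α : Fin m → ℂ) (s : Fin m → ℕ)
    (x0 : ℂ) (x : Fin m → Fin d → ℕ → ℂ) : ℤ → ℂ :=
  fun n => if 0 ≤ n then vseq q P d α s x0 x n.toNat else 0

/-- The difference operator `D_a(ξ)(n) = ξ(n) − a·ξ(n−1)`. -/
def Dop (a : ℂ) (ξ : ℤ → ℂ) : ℤ → ℂ := fun n => ξ n - a * ξ (n - 1)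

/-- The operator `∏_{j=1}^m D_{α_j·c}^{s_j}` (all the operators `D_a` commute, so the order
of composition is irrelevant). -/
def rowOp {m : ℕ} (α : Fin m → ℂ) (s : Fin m → ℕ) (c : ℂ) : (ℤ → ℂ) → (ℤ → ℂ) :=
  (List.finRange m).foldr (fun j acc => (Dop (α j * c))^[s j] ∘ acc) id

/-- The operator `∏_{k=1}^l ∏_{j=1}^m D_{α_j q^{ν−k}}^{s_j}`. -/
def bigOp {m : ℕ} (α : Fin m → ℂ) (s : Fin m → ℕ) (q : ℂ) (ν : ℤ) (l : ℕ) :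
    (ℤ → ℂ) → (ℤ → ℂ) :=
  (List.range l).foldr (fun k acc => rowOp α s (q ^ (ν - ((k : ℤ) + 1))) ∘ acc) id

/-- `v_{l,n}(x) = (∏_{k=1}^l ∏_{j=1}^m D_{α_j q^{−k}}^{s_j})(v_·(x))(n)`. -/
def vln (q : ℚ) (P : Polynomial ℚ) {m : ℕ} (d : ℕ) (α : Fin m → ℂ) (s : Fin m → ℕ)
    (x0 : ℂ) (x : Fin m → Fin d → ℕ → ℂ) (l n : ℕ) : ℂ :=
  bigOp α s (q : ℂ) 0 l (vext q P d α s x0 x) (n : ℤ)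

/-- `P(z) = p_d z^d` is a monomial. -/
def IsMonomialP (P : Polynomial ℚ) : Prop :=
  P = Polynomial.C P.leadingCoeff * Polynomial.X ^ P.natDegree

/-- `ε₀ = 1` if `P` is a monomial and `ε₀ = 0` otherwise. -/
def eps0 (P : Polynomial ℚ) : ℝ := if IsMonomialP P then 1 else 0

/-- The quantity `M` from the theorem. -/
def Mval (d S : ℕ) (P : Polynomial ℚ) : ℝ :=
  if IsMonomialP P then
    (d * S : ℝ) + 1 / 2 + Real.sqrt ((d * S : ℝ) ^ 2 + 1 / 4)
  else (d * S : ℝ) + 1 + Real.sqrt ((d * S : ℝ) * ((d * S : ℝ) + 1))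

/-- The standard basis vector `e_{j,k,σ}` of the space of coefficient vectors. -/
def basisVec {m : ℕ} (d : ℕ) (j : Fin m) (k : Fin d) (σ : ℕ) :
    Fin m → Fin d → ℕ → ℂ :=
  fun j' k' σ' => if j' = j ∧ k' = k ∧ σ' = σ then 1 else 0

/-- The normalized form `w_{l,n}(x) = Dⁿ q₁^{Sl(l+1)/2} q₂^{dn(n+1)/2} v_{l,n}(x)`. -/
def wln (q : ℚ) (P : Polynomial ℚ) {m : ℕ} (d : ℕ) (α : Fin m → ℂ) (s : Fin m → ℕ)
    (q₁ q₂ : ℤ) (D S : ℕ) (x0 : ℂ) (x : Fin m → Fin d → ℕ → ℂ) (l n : ℕ) : ℂ :=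
  (D : ℂ) ^ n * (q₁ : ℂ) ^ (S * (l * (l + 1) / 2)) * (q₂ : ℂ) ^ (d * (n * (n + 1) / 2)) *
    vln q P d α s x0 x l n


/-! ### Auxiliary lemmas for the proof of `stmt_8` -/

def BoundedOp (K : ℕ) (B : ℝ) (T : (ℤ → ℂ) → (ℤ → ℂ)) : Prop :=
  ∀ (ξ : ℤ → ℂ) (n : ℤ) (M : ℝ), 0 ≤ M →
    (∀ t : ℕ, t ≤ K → ‖(ξ (n - t))‖ ≤ M) →
    ‖(T ξ n)‖ ≤ B * M

lemma boundedOp_id (K : ℕ) : BoundedOp K 1 id := by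
  intro ξ n M hM h
  simpa using h 0 (Nat.zero_le _)

lemma boundedOp_mono {K : ℕ} {B B' : ℝ} {T} (h : BoundedOp K B T) (hBB : B ≤ B') :
    BoundedOp K B' T := by
  intro ξ n M hM hh
  exact (h ξ n M hM hh).trans (by nlinarith)

lemma boundedOp_comp {K₁ K₂ : ℕ} {B₁ B₂ : ℝ} {T₁ T₂} (hB₂ : 0 ≤ B₂)
    (h₁ : BoundedOp K₁ B₁ T₁) (h₂ : BoundedOp K₂ B₂ T₂) :
    BoundedOp (K₁ + K₂) (B₁ * B₂) (T₁ ∘ T₂) := by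
  intro ξ n M hM hh
  have : ‖(T₁ (T₂ ξ) n)‖ ≤ B₁ * (B₂ * M) := by
    apply h₁ (T₂ ξ) n (B₂ * M) (mul_nonneg hB₂ hM)
    intro r hr
    apply h₂ ξ (n - r) M hM
    intro t ht
    have e : n - r - t = n - ((r + t : ℕ) : ℤ) := by push_cast; ring
    rw [e]
    exact hh (r + t) (by omega)
  simpa [mul_assoc] using this

lemma boundedOp_dop (a : ℂ) : BoundedOp 1 (1 + ‖a‖) (Dop a) := by
  intro ξ n M hM hh
  have h0 := hh 0 (by norm_num)
  have h1 := hh 1 (le_refl _)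
  simp only [Nat.cast_zero, sub_zero, Nat.cast_one] at h0 h1
  calc ‖(ξ n - a * ξ (n - 1))‖ ≤ ‖(ξ n)‖ + ‖(a * ξ (n-1))‖ :=
        norm_sub_le _ _
    _ ≤ M + ‖a‖ * M := by
        rw [norm_mul]
        exact add_le_add h0 (mul_le_mul_of_nonneg_left h1 (norm_nonneg _))
    _ = (1 + ‖a‖) * M := by ring

lemma boundedOp_dop_iter (a : ℂ) (k : ℕ) :
    BoundedOp k ((1 + ‖a‖) ^ k) ((Dop a)^[k]) := by
  induction k with
  | zero => simpa using boundedOp_id 0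
  | succ k ih =>
      have := boundedOp_comp (B₂ := 1 + ‖a‖)
        (by positivity) ih (boundedOp_dop a)
      rw [Function.iterate_succ]
      convert this using 2
      exact pow_succ _ _

lemma boundedOp_rowOp {m : ℕ} (α : Fin m → ℂ) (s : Fin m → ℕ) (c : ℂ) (A : ℝ)
    (hA0 : 0 ≤ A) (hA : ∀ j, ‖(α j * c)‖ ≤ A) :
    BoundedOp (∑ j, s j) ((1 + A) ^ (∑ j, s j)) (rowOp α s c) := by
  have aux : ∀ L : List (Fin m),
      BoundedOp (L.map s).sum ((1 + A) ^ (L.map s).sum)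
        (L.foldr (fun j acc => (Dop (α j * c))^[s j] ∘ acc) id) := by
    intro L
    induction L with
    | nil => simpa using boundedOp_id 0
    | cons j L ih =>
        have h1 : BoundedOp (s j) ((1 + A) ^ (s j)) ((Dop (α j * c))^[s j]) := by
          apply boundedOp_mono (boundedOp_dop_iter (α j * c) (s j))
          exact pow_le_pow_left₀ (by positivity) (by linarith [hA j]) _
        have := boundedOp_comp (by positivity) h1 ih
        simpa [pow_add] using this
  have h := aux (List.finRange m)
  rw [rowOp]
  convert h using 2 <;> rw [Fin.sum_univ_def] <;> rfl

lemma boundedOp_bigOp {m : ℕ} (α : Fin m → ℂ) (s : Fin m → ℕ) (q : ℂ) (l : ℕ) (A : ℝ)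
    (hA0 : 0 ≤ A) (hA : ∀ (j : Fin m) (k : ℕ), ‖(α j * q ^ (0 - ((k : ℤ) + 1)))‖ ≤ A) :
    BoundedOp (l * (∑ j, s j)) ((1 + A) ^ (l * (∑ j, s j))) (bigOp α s q 0 l) := by
  have aux : ∀ L : List ℕ,
      BoundedOp (L.length * (∑ j, s j)) ((1 + A) ^ (L.length * (∑ j, s j)))
        (L.foldr (fun k acc => rowOp α s (q ^ ((0:ℤ) - ((k : ℤ) + 1))) ∘ acc) id) := by
    intro L
    induction L with
    | nil => simpa using boundedOp_id 0
    | cons k L ih =>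
        have h1 := boundedOp_rowOp α s (q ^ ((0:ℤ) - ((k : ℤ) + 1))) A hA0 (fun j => hA j k)
        have h2 := boundedOp_comp (by positivity) h1 ih
        have e : (k :: L).length * (∑ j, s j) = (∑ j, s j) + L.length * (∑ j, s j) := by
          simp [List.length_cons]; ring
        rw [e, pow_add]
        exact h2
  have h := aux (List.range l)
  rw [bigOp]
  convert h using 2 <;> simp [List.length_range]

lemma prodP_eq_Icc (q : ℚ) (P : Polynomial ℚ) (ν : ℕ) :
    prodP q P ν = ∏ k ∈ Finset.Icc 1 ν, Pq q P k := by
  induction ν with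
  | zero => simp [prodP]
  | succ ν ih =>
      rw [prodP, Finset.prod_range_succ, ← prodP, ih,
        Finset.prod_Icc_succ_top (Nat.succ_le_succ (Nat.zero_le _))]

lemma gauss_sum_le {t : Finset ℕ} {n : ℕ} (ht : t ⊆ Finset.Icc 1 n) :
    ∑ k ∈ t, k ≤ n * (n + 1) / 2 := by
  have h1 : ∑ k ∈ t, k ≤ ∑ k ∈ Finset.range (n+1), k := by
    apply Finset.sum_le_sum_of_subset
    intro x hx
    have := ht hx
    simp only [Finset.mem_Icc] at this
    simp only [Finset.mem_range]
    omega
  have h3 : (∑ k ∈ Finset.range (n+1), k) * 2 = n * (n + 1) := by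
    rw [Finset.sum_range_id_mul_two (n+1), Nat.add_sub_cancel, Nat.mul_comm]
  rw [Nat.div_eq_of_eq_mul_left (by norm_num) h3.symm]
  exact h1

lemma pow_prod5 (a b c e f : ℝ) (k : ℕ) :
    a ^ k * (b ^ k * (c ^ k * e ^ k * f ^ k)) = (a * b * c * e * f) ^ k := by
  rw [mul_pow, mul_pow, mul_pow, mul_pow]; ring

lemma pow_prod4 (a b c e : ℝ) (k : ℕ) :
    a ^ k * b ^ k * (c ^ k * e ^ k) = (a * b * c * e) ^ k := by
  rw [mul_pow, mul_pow, mul_pow]; ring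
set_option maxHeartbeats 1600000 in
/-- the height estimate for the forms `w_{l,n}`. -/
theorem stmt_8
    (q₁ q₂ : ℤ) (hq₁ : q₁ ≠ 0) (hq₂ : q₂ ≠ 0) (hcop : Int.gcd q₁ q₂ = 1)
    (habs : |q₂| < |q₁|)
    (q : ℚ) (hq : q = (q₁ : ℚ) / (q₂ : ℚ))
    (P : Polynomial ℚ) (d : ℕ) (hd : d = P.natDegree) (hd1 : 1 ≤ d)
    (hP : ∀ n : ℕ, 1 ≤ n → P.eval (q ^ n) ≠ 0)
    (m : ℕ) (α : Fin m → ℚ) (hα : ∀ j, α j ≠ 0)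
    (s : Fin m → ℕ) (hs : ∀ j, 0 < s j)
    (S : ℕ) (hS : S = ∑ j, s j)
    (D : ℕ) (hD : 0 < D)
    (hDP : ∀ i : ℕ, ∃ z : ℤ, (D : ℚ) * P.coeff i = (z : ℚ))
    (hDα : ∀ (j : Fin m) (k : Fin d), ∃ z : ℤ, (D : ℚ) * α j * q ^ (k : ℕ) = (z : ℚ)) :
    ∃ C : ℝ, 0 < C ∧
      ∀ l n : ℕ, S * l ≤ n →
        max (‖(wln q P d (fun j => (α j : ℂ)) s q₁ q₂ D S 1 0 l n)‖)
          ((Finset.univ.sup fun j : Fin m => Finset.univ.sup fun k : Fin d =>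
              (Finset.range (s j)).sup fun σ =>
                ‖wln q P d (fun j' => (α j' : ℂ)) s q₁ q₂ D S 0 (basisVec d j k σ) l n‖₊
            : NNReal) : ℝ)
          ≤ |(q₁ : ℝ)| ^ ((d : ℝ) * (n : ℝ) ^ 2 / 2 + (S : ℝ) * (l : ℝ) ^ 2 / 2
              + C * ((n : ℝ) + 1)) := by
  -- Setup of basic constants and facts
  have hq₂R : (1:ℝ) ≤ |(q₂:ℝ)| := by
    have : (1:ℤ) ≤ |q₂| := Int.one_le_abs hq₂
    calc (1:ℝ) = ((1:ℤ):ℝ) := by norm_num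
      _ ≤ ((|q₂|:ℤ):ℝ) := by exact_mod_cast this
      _ = |(q₂:ℝ)| := by push_cast; ring
  have habsR : |(q₂:ℝ)| < |(q₁:ℝ)| := by
    have := habs
    calc |(q₂:ℝ)| = ((|q₂|:ℤ):ℝ) := by push_cast; ring
      _ < ((|q₁|:ℤ):ℝ) := by exact_mod_cast this
      _ = |(q₁:ℝ)| := by push_cast; ring
  have hq₁2 : (2:ℝ) ≤ |(q₁:ℝ)| := by
    have h1 : (2:ℤ) ≤ |q₁| := by
      have := Int.one_le_abs hq₂; omega
    calc (2:ℝ) = ((2:ℤ):ℝ) := by norm_num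
      _ ≤ ((|q₁|:ℤ):ℝ) := by exact_mod_cast h1
      _ = |(q₁:ℝ)| := by push_cast; ring
  have hq₁R : (1:ℝ) < |(q₁:ℝ)| := by linarith
  have hq0 : q ≠ 0 := by
    rw [hq]
    exact div_ne_zero (Int.cast_ne_zero.mpr hq₁) (Int.cast_ne_zero.mpr hq₂)
  set α' : Fin m → ℂ := fun j => (α j : ℂ) with hα'
  set Q : ℝ := |(q:ℝ)| with hQdef
  have hQr : (q : ℝ) = (q₁:ℝ)/(q₂:ℝ) := by rw [hq]; push_cast; ring
  have hQeq : Q = |(q₁:ℝ)| / |(q₂:ℝ)| := by rw [hQdef, hQr, abs_div]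
  have hQ1 : 1 ≤ Q := by
    rw [hQeq]
    rw [one_le_div (by linarith)]
    linarith
  have hq12 : |(q₂:ℝ)| * Q = |(q₁:ℝ)| := by
    rw [hQeq]; field_simp
  have hQabs : ‖((q:ℚ):ℂ)‖ = Q := by
    rw [show ((q:ℚ):ℂ) = (((q:ℝ)):ℂ) by push_cast; ring, Complex.norm_real, Real.norm_eq_abs]
  -- the constant A bounding the α's
  set A : ℝ := 1 + ∑ j, ‖(α' j)‖ with hAdef
  have hA1 : 1 ≤ A := by
    rw [hAdef]
    have : 0 ≤ ∑ j, ‖(α' j)‖ :=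
      Finset.sum_nonneg fun j _ => norm_nonneg _
    linarith
  have hA0 : 0 ≤ A := by linarith
  have hAj : ∀ j, ‖(α' j)‖ ≤ A := by
    intro j
    have := Finset.single_le_sum (f := fun j => ‖(α' j)‖)
      (fun i _ => norm_nonneg _) (Finset.mem_univ j)
    rw [hAdef]; linarith
  have hAbig : ∀ (j : Fin m) (k : ℕ),
      ‖(α' j * ((q:ℚ):ℂ) ^ ((0:ℤ) - ((k : ℤ) + 1)))‖ ≤ A := by
    intro j k
    rw [norm_mul, norm_zpow, hQabs]
    have h1 : Q ^ ((0:ℤ) - ((k : ℤ) + 1)) ≤ 1 :=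
      zpow_le_one_of_nonpos₀ hQ1 (by omega)
    have h2 : (0:ℝ) ≤ Q ^ ((0:ℤ) - ((k : ℤ) + 1)) :=
      zpow_nonneg (by linarith) _
    calc ‖(α' j)‖ * Q ^ ((0:ℤ) - ((k : ℤ) + 1)) ≤ ‖(α' j)‖ * 1 := by
          exact mul_le_mul_of_nonneg_left h1 (norm_nonneg _)
      _ ≤ A := by rw [mul_one]; exact hAj j
  -- the constant C₁ bounding the coefficients of P
  set C₁ : ℝ := 1 + ∑ i ∈ Finset.range (P.natDegree + 1), |((P.coeff i : ℚ):ℝ)| with hC₁def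
  have hC₁1 : 1 ≤ C₁ := by
    rw [hC₁def]
    have : 0 ≤ ∑ i ∈ Finset.range (P.natDegree + 1), |((P.coeff i : ℚ):ℝ)| :=
      Finset.sum_nonneg fun i _ => abs_nonneg _
    linarith
  have hC₁0 : 0 ≤ C₁ := by linarith
  -- bound for |P(q^k)|
  have hPqb : ∀ k : ℕ, ‖(Pq q P k)‖ ≤ C₁ * Q ^ (d * k) := by
    intro k
    have he : P.eval (q^k) = ∑ i ∈ Finset.range (P.natDegree + 1), P.coeff i * (q^k)^i :=
      Polynomial.eval_eq_sum_range _
    rw [Pq, show ((P.eval (q^k) : ℚ):ℂ) = (((P.eval (q^k) : ℚ):ℝ):ℂ) by push_cast; ring,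
      Complex.norm_real, Real.norm_eq_abs, he]
    push_cast
    have hQk1 : (1:ℝ) ≤ Q ^ (d*k) := one_le_pow₀ hQ1
    calc |∑ i ∈ Finset.range (P.natDegree + 1), ((P.coeff i : ℚ):ℝ) * ((q:ℝ)^k)^i|
        ≤ ∑ i ∈ Finset.range (P.natDegree + 1), |((P.coeff i : ℚ):ℝ) * ((q:ℝ)^k)^i| :=
          Finset.abs_sum_le_sum_abs _ _
      _ ≤ ∑ i ∈ Finset.range (P.natDegree + 1), |((P.coeff i : ℚ):ℝ)| * Q ^ (d * k) := by
          apply Finset.sum_le_sum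
          intro i hi
          rw [abs_mul]
          apply mul_le_mul_of_nonneg_left _ (abs_nonneg _)
          rw [abs_pow, abs_pow, ← hQdef, ← pow_mul]
          apply pow_le_pow_right₀ hQ1
          have : i ≤ P.natDegree := by
            simp only [Finset.mem_range] at hi; omega
          calc k * i ≤ k * P.natDegree := Nat.mul_le_mul_left _ this
            _ = d * k := by rw [hd]; ring
      _ = (∑ i ∈ Finset.range (P.natDegree + 1), |((P.coeff i : ℚ):ℝ)|) * Q ^ (d*k) := by
          rw [Finset.sum_mul]
      _ ≤ C₁ * Q ^ (d*k) := by
          apply mul_le_mul_of_nonneg_right _ (by linarith)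
          rw [hC₁def]; linarith
  -- bound for products of P-values
  have hprodsub : ∀ (n : ℕ) (t : Finset ℕ), t ⊆ Finset.Icc 1 n →
      ‖(∏ k ∈ t, Pq q P k)‖ ≤ C₁ ^ n * Q ^ (d * (n * (n+1) / 2)) := by
    intro n t ht
    rw [norm_prod]
    calc ∏ k ∈ t, ‖(Pq q P k)‖ ≤ ∏ k ∈ t, (C₁ * Q ^ (d * k)) :=
          Finset.prod_le_prod (fun k _ => norm_nonneg _) (fun k _ => hPqb k)
      _ = C₁ ^ t.card * Q ^ (∑ k ∈ t, d * k) := by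
          rw [Finset.prod_mul_distrib, Finset.prod_const, Finset.prod_pow_eq_pow_sum]
      _ ≤ C₁ ^ n * Q ^ (d * (n * (n+1) / 2)) := by
          apply mul_le_mul
          · apply pow_le_pow_right₀ hC₁1
            calc t.card ≤ (Finset.Icc 1 n).card := Finset.card_le_card ht
              _ = n := by rw [Nat.card_Icc]; omega
          · apply pow_le_pow_right₀ hQ1
            rw [← Finset.mul_sum]
            exact Nat.mul_le_mul_left _ (gauss_sum_le ht)
          · exact pow_nonneg (by linarith) _
          · exact pow_nonneg (by linarith) _
  -- the constant ρ bounding α_j q^k and its inverse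
  set ρ : ℝ := A * Q ^ d + (1 + ∑ j : Fin m, ∑ k : Fin d,
      (‖(α' j * ((q:ℚ):ℂ) ^ (k:ℕ))‖)⁻¹) with hρdef
  have hinv_nonneg : (0:ℝ) ≤ ∑ j : Fin m, ∑ k : Fin d,
      (‖(α' j * ((q:ℚ):ℂ) ^ (k:ℕ))‖)⁻¹ :=
    Finset.sum_nonneg fun j _ => Finset.sum_nonneg fun k _ =>
      inv_nonneg.mpr (norm_nonneg _)
  have hQd0 : (0:ℝ) ≤ A * Q ^ d := mul_nonneg hA0 (pow_nonneg (by linarith) _)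
  have hρ1 : 1 ≤ ρ := by rw [hρdef]; linarith
  have hρ0 : 0 ≤ ρ := by linarith
  have hzne : ∀ (j : Fin m) (k : Fin d), (α' j * ((q:ℚ):ℂ) ^ (k:ℕ)) ≠ 0 := by
    intro j k
    apply mul_ne_zero
    · rw [hα']
      exact_mod_cast Rat.cast_ne_zero.mpr (hα j)
    · exact pow_ne_zero _ (by exact_mod_cast Rat.cast_ne_zero.mpr hq0)
  have hρup : ∀ (j : Fin m) (k : Fin d), ‖(α' j * ((q:ℚ):ℂ) ^ (k:ℕ))‖ ≤ ρ := by
    intro j k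
    rw [norm_mul, norm_pow, hQabs]
    have h1 : Q ^ (k:ℕ) ≤ Q ^ d :=
      pow_le_pow_right₀ hQ1 (le_of_lt k.isLt)
    have : ‖(α' j)‖ * Q ^ (k:ℕ) ≤ A * Q ^ d :=
      mul_le_mul (hAj j) h1 (pow_nonneg (by linarith) _) hA0
    rw [hρdef]; linarith
  have hρinv : ∀ (j : Fin m) (k : Fin d),
      (‖(α' j * ((q:ℚ):ℂ) ^ (k:ℕ))‖)⁻¹ ≤ ρ := by
    intro j k
    have h1 : (‖(α' j * ((q:ℚ):ℂ) ^ (k:ℕ))‖)⁻¹ ≤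
        ∑ k' : Fin d, (‖(α' j * ((q:ℚ):ℂ) ^ (k':ℕ))‖)⁻¹ :=
      Finset.single_le_sum (f := fun (k' : Fin d) => (‖(α' j * ((q:ℚ):ℂ) ^ ((k':Fin d):ℕ))‖)⁻¹)
        (fun i _ => inv_nonneg.mpr (norm_nonneg _)) (Finset.mem_univ k)
    have h2 : ∑ k' : Fin d, (‖(α' j * ((q:ℚ):ℂ) ^ (k':ℕ))‖)⁻¹ ≤
        ∑ j' : Fin m, ∑ k' : Fin d, (‖(α' j' * ((q:ℚ):ℂ) ^ (k':ℕ))‖)⁻¹ :=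
      Finset.single_le_sum
        (f := fun (j' : Fin m) => ∑ k' : Fin d, (‖(α' j' * ((q:ℚ):ℂ) ^ ((k':Fin d):ℕ))‖)⁻¹)
        (fun i _ => Finset.sum_nonneg fun k' _ => inv_nonneg.mpr (norm_nonneg _))
        (Finset.mem_univ j)
    rw [hρdef]; linarith
  -- bound for the zpow factors
  have hzpow : ∀ (j : Fin m) (k : Fin d) (e : ℤ) (n : ℕ), -(S:ℤ) ≤ e → e ≤ (n:ℤ) →
      ‖((α' j * ((q:ℚ):ℂ) ^ (k:ℕ)) ^ e)‖ ≤ ρ ^ (n + S) := by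
    intro j k e n he1 he2
    rw [norm_zpow]
    set r : ℝ := ‖(α' j * ((q:ℚ):ℂ) ^ (k:ℕ))‖ with hrdef
    have hr0 : 0 < r := norm_pos_iff.mpr (hzne j k)
    rcases le_or_gt 0 e with he | he
    · rw [show e = ((e.toNat : ℕ) : ℤ) by omega, zpow_natCast]
      calc r ^ e.toNat ≤ ρ ^ e.toNat := pow_le_pow_left₀ (le_of_lt hr0) (hρup j k) _
        _ ≤ ρ ^ (n + S) := pow_le_pow_right₀ hρ1 (by omega)
    · rw [show e = -(((-e).toNat : ℕ) : ℤ) by omega, zpow_neg, zpow_natCast, ← inv_pow]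
      calc r⁻¹ ^ (-e).toNat ≤ ρ ^ (-e).toNat :=
            pow_le_pow_left₀ (inv_nonneg.mpr (le_of_lt hr0)) (hρinv j k) _
        _ ≤ ρ ^ (n + S) := pow_le_pow_right₀ hρ1 (by omega)
  -- bound for the falling factorials
  have hfall : ∀ (l σ n : ℕ), l ≤ n → σ ≤ S →
      ‖(∏ i ∈ Finset.range σ, ((((l:ℤ)):ℂ) - (i:ℂ)))‖ ≤ ((n:ℝ) + S) ^ S := by
    intro l σ n hl hσ
    rw [norm_prod]
    have hbase : ∀ i ∈ Finset.range σ, ‖((((l:ℤ)):ℂ) - (i:ℂ))‖ ≤ (n:ℝ) + S := by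
      intro i hi
      have hiS : (i:ℝ) ≤ (S:ℝ) := by
        have : i < σ := Finset.mem_range.mp hi
        exact_mod_cast by omega
      calc ‖((((l:ℤ)):ℂ) - (i:ℂ))‖
          ≤ ‖(((l:ℤ):ℂ))‖ + ‖((i:ℂ))‖ := norm_sub_le _ _
        _ = (l:ℝ) + (i:ℝ) := by
            rw [Complex.norm_intCast, Complex.norm_natCast]
            push_cast; simp [abs_of_nonneg]
        _ ≤ (n:ℝ) + (S:ℝ) := by
            have : (l:ℝ) ≤ (n:ℝ) := by exact_mod_cast hl
            linarith
    calc ∏ i ∈ Finset.range σ, ‖((((l:ℤ)):ℂ) - (i:ℂ))‖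
        ≤ ∏ i ∈ Finset.range σ, ((n:ℝ) + S) :=
          Finset.prod_le_prod (fun i _ => norm_nonneg _) hbase
      _ = ((n:ℝ) + S) ^ σ := by rw [Finset.prod_const, Finset.card_range]
      _ ≤ ((n:ℝ) + S) ^ S := by
          rcases Nat.eq_zero_or_pos S with hS0 | hS0
          · have : σ = 0 := by omega
            rw [this, hS0]
          · apply pow_le_pow_right₀ _ hσ
            have : (1:ℝ) ≤ (S:ℝ) := by exact_mod_cast hS0
            linarith
  have hsS : ∀ j, s j ≤ S := by
    intro j
    rw [hS]
    exact Finset.single_le_sum (f := s) (fun i _ => Nat.zero_le _) (Finset.mem_univ j)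
  -- bound for u_l(x) when the coordinates of x are bounded by 1
  have huse : ∀ (x : Fin m → Fin d → ℕ → ℂ), (∀ j k σ, ‖(x j k σ)‖ ≤ 1) →
      ∀ (l n : ℕ), l ≤ n →
      ‖(useq q d α' s x (l:ℤ))‖ ≤
        ((d:ℝ) * S) * (((n:ℝ) + S) ^ S * ρ ^ (n + S)) := by
    intro x hx l n hl
    set c : ℝ := ((n:ℝ) + S) ^ S * ρ ^ (n + S) with hcdef
    have hc0 : 0 ≤ c := by
      apply mul_nonneg _ (pow_nonneg hρ0 _)
      apply pow_nonneg
      positivity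
    have hterm : ∀ (j : Fin m) (k : Fin d), ∀ σ ∈ Finset.range (s j),
        ‖((∏ i ∈ Finset.range σ, (((l:ℤ):ℂ) - (i:ℂ))) *
          (α' j * ((q:ℚ):ℂ) ^ (k:ℕ)) ^ ((l:ℤ) - (σ:ℤ)) * x j k σ)‖ ≤ c := by
      intro j k σ hσ
      have hσs : σ < s j := Finset.mem_range.mp hσ
      have hσS : σ ≤ S := by have := hsS j; omega
      rw [norm_mul, norm_mul]
      have h1 := hfall l σ n hl hσS
      have h2 := hzpow j k ((l:ℤ) - (σ:ℤ)) n (by omega) (by omega)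
      have h3 := hx j k σ
      calc ‖(∏ i ∈ Finset.range σ, (((l:ℤ):ℂ) - (i:ℂ)))‖ *
            ‖((α' j * ((q:ℚ):ℂ) ^ (k:ℕ)) ^ ((l:ℤ) - (σ:ℤ)))‖ *
            ‖(x j k σ)‖
          ≤ (((n:ℝ) + S) ^ S) * (ρ ^ (n + S)) * 1 :=
            mul_le_mul (mul_le_mul h1 h2 (norm_nonneg _) (by positivity))
              h3 (norm_nonneg _)
              (mul_nonneg (by positivity) (pow_nonneg hρ0 _))
        _ = c := by rw [hcdef]; ring
    rw [useq]
    calc ‖(∑ j : Fin m, ∑ k : Fin d, ∑ σ ∈ Finset.range (s j),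
          (∏ i ∈ Finset.range σ, ((((l:ℤ)):ℂ) - (i:ℂ))) *
            (α' j * ((q:ℚ):ℂ) ^ (k:ℕ)) ^ ((l:ℤ) - (σ:ℤ)) * x j k σ)‖
        ≤ ∑ j : Fin m, ‖(∑ k : Fin d, ∑ σ ∈ Finset.range (s j),
            (∏ i ∈ Finset.range σ, ((((l:ℤ)):ℂ) - (i:ℂ))) *
              (α' j * ((q:ℚ):ℂ) ^ (k:ℕ)) ^ ((l:ℤ) - (σ:ℤ)) * x j k σ)‖ := by
          exact norm_sum_le _ _
      _ ≤ ∑ j : Fin m, ∑ k : Fin d, ∑ σ ∈ Finset.range (s j), c := by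
          apply Finset.sum_le_sum
          intro j _
          calc ‖(∑ k : Fin d, ∑ σ ∈ Finset.range (s j), _)‖
              ≤ ∑ k : Fin d, ‖(∑ σ ∈ Finset.range (s j),
                (∏ i ∈ Finset.range σ, ((((l:ℤ)):ℂ) - (i:ℂ))) *
                  (α' j * ((q:ℚ):ℂ) ^ (k:ℕ)) ^ ((l:ℤ) - (σ:ℤ)) * x j k σ)‖ :=
                norm_sum_le _ _
            _ ≤ ∑ k : Fin d, ∑ σ ∈ Finset.range (s j), c := by
                apply Finset.sum_le_sum
                intro k _
                calc ‖(∑ σ ∈ Finset.range (s j), _)‖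
                    ≤ ∑ σ ∈ Finset.range (s j), ‖((∏ i ∈ Finset.range σ, ((((l:ℤ)):ℂ) - (i:ℂ))) *
                        (α' j * ((q:ℚ):ℂ) ^ (k:ℕ)) ^ ((l:ℤ) - (σ:ℤ)) * x j k σ)‖ :=
                      norm_sum_le _ _
                  _ ≤ ∑ σ ∈ Finset.range (s j), c :=
                      Finset.sum_le_sum (hterm j k)
      _ = ((d:ℝ) * S) * c := by
          have hsum : (∑ j : Fin m, ((s j : ℝ))) = (S:ℝ) := by rw [hS]; push_cast; ring
          simp only [Finset.sum_const, Finset.card_range, Finset.card_univ,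
            Fintype.card_fin, nsmul_eq_mul, ← Finset.mul_sum, ← Finset.sum_mul, hsum]
          ring
  -- auxiliary: product of reals ≥ 1
  have mul1 : ∀ a b : ℝ, 1 ≤ a → 1 ≤ b → 1 ≤ a * b := fun a b ha hb => by nlinarith
  -- the master constants
  set c₁ : ℝ := 2 * (1 + (d:ℝ) * S) * 2 ^ S * ((S:ℝ) + 1) ^ S * ρ ^ (S+1) with hc₁def
  have hc₁1 : 1 ≤ c₁ := by
    rw [hc₁def]
    apply mul1
    apply mul1
    apply mul1
    apply mul1
    · norm_num
    · have : (0:ℝ) ≤ (d:ℝ) * S := by positivity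
      linarith
    · exact one_le_pow₀ (by norm_num)
    · apply one_le_pow₀
      have : (0:ℝ) ≤ (S:ℝ) := by positivity
      linarith
    · exact one_le_pow₀ hρ1
  set c₀ : ℝ := ((D:ℝ) + 1) * (1 + A) * (C₁ + 1) * c₁ with hc₀def
  have hD1 : (1:ℝ) ≤ (D:ℝ) := by exact_mod_cast hD
  have hc₀1 : 1 ≤ c₀ := by
    rw [hc₀def]
    apply mul1
    apply mul1
    apply mul1
    · linarith
    · linarith
    · linarith
    · exact hc₁1
  set Lg : ℝ := Real.logb |(q₁:ℝ)| c₀ with hLgdef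
  have hLg0 : 0 ≤ Lg := Real.logb_nonneg hq₁R hc₀1
  refine ⟨Lg + d + S + 1, by positivity, ?_⟩
  intro l n hln
  -- notation for this l, n
  set U : ℝ := ((d:ℝ) * S) * (((n:ℝ) + S) ^ S * ρ ^ (n + S)) with hUdef
  have hU0 : 0 ≤ U := by
    rw [hUdef]
    apply mul_nonneg (by positivity)
    exact mul_nonneg (by positivity) (pow_nonneg hρ0 _)
  set E₁ : ℕ := S * (l * (l + 1) / 2) with hE₁def
  set E₂ : ℕ := d * (n * (n + 1) / 2) with hE₂def
  set Mv : ℝ := (C₁ ^ n + ((n:ℝ) + 1) * U * C₁ ^ n) * Q ^ E₂ with hMvdef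
  have hC₁n0 : (0:ℝ) ≤ C₁ ^ n := pow_nonneg hC₁0 _
  have hQE0 : (0:ℝ) ≤ Q ^ E₂ := pow_nonneg (by linarith) _
  have hMv0 : 0 ≤ Mv := by
    rw [hMvdef]
    apply mul_nonneg _ hQE0
    have : (0:ℝ) ≤ ((n:ℝ) + 1) * U * C₁ ^ n :=
      mul_nonneg (mul_nonneg (by positivity) hU0) hC₁n0
    linarith
  -- bound for the two vseq's of interest
  have hv1 : ∀ ν : ℕ, ν ≤ n → ‖(vseq q P d α' s 1 0 ν)‖ ≤ Mv := by
    intro ν hν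
    have he : vseq q P d α' s 1 0 ν = prodP q P ν := by
      simp [vseq, useq]
    rw [he, prodP_eq_Icc]
    have h := hprodsub n (Finset.Icc 1 ν) (Finset.Icc_subset_Icc_right hν)
    rw [← hE₂def] at h
    have h2 : (0:ℝ) ≤ ((n:ℝ) + 1) * U * C₁ ^ n * Q ^ E₂ :=
      mul_nonneg (mul_nonneg (mul_nonneg (by positivity) hU0) hC₁n0) hQE0
    rw [hMvdef]
    nlinarith
  have hv2 : ∀ (x : Fin m → Fin d → ℕ → ℂ), (∀ j k σ, ‖(x j k σ)‖ ≤ 1) →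
      ∀ ν : ℕ, ν ≤ n → ‖(vseq q P d α' s 0 x ν)‖ ≤ Mv := by
    intro x hx ν hν
    have he : vseq q P d α' s 0 x ν =
        ∑ l' ∈ Finset.range (ν + 1), useq q d α' s x (l' : ℤ) *
          ∏ k ∈ Finset.Icc (l' + 1) ν, Pq q P k := by
      simp [vseq]
    rw [he]
    have hterm : ∀ l' ∈ Finset.range (ν + 1),
        ‖(useq q d α' s x (l' : ℤ) * ∏ k ∈ Finset.Icc (l' + 1) ν, Pq q P k)‖ ≤
          U * (C₁ ^ n * Q ^ E₂) := by
      intro l' hl'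
      have hl'n : l' ≤ n := by
        have := Finset.mem_range.mp hl'; omega
      rw [norm_mul]
      apply mul_le_mul (by rw [hUdef]; exact huse x hx l' n hl'n) _
        (norm_nonneg _) hU0
      have h := hprodsub n (Finset.Icc (l' + 1) ν) (Finset.Icc_subset_Icc (by omega) hν)
      rw [← hE₂def] at h
      exact h
    calc ‖(∑ l' ∈ Finset.range (ν + 1), useq q d α' s x (l' : ℤ) *
          ∏ k ∈ Finset.Icc (l' + 1) ν, Pq q P k)‖
        ≤ ∑ l' ∈ Finset.range (ν + 1), ‖(useq q d α' s x (l' : ℤ) *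
            ∏ k ∈ Finset.Icc (l' + 1) ν, Pq q P k)‖ := norm_sum_le _ _
      _ ≤ ∑ l' ∈ Finset.range (ν + 1), U * (C₁ ^ n * Q ^ E₂) :=
          Finset.sum_le_sum hterm
      _ = ((ν:ℝ) + 1) * (U * (C₁ ^ n * Q ^ E₂)) := by
          rw [Finset.sum_const, Finset.card_range, nsmul_eq_mul]; push_cast; ring
      _ ≤ ((n:ℝ) + 1) * (U * (C₁ ^ n * Q ^ E₂)) := by
          apply mul_le_mul_of_nonneg_right _ (mul_nonneg hU0 (mul_nonneg hC₁n0 hQE0))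
          have : (ν:ℝ) ≤ (n:ℝ) := by exact_mod_cast hν
          linarith
      _ ≤ Mv := by
          rw [hMvdef]
          have h2 : (0:ℝ) ≤ C₁ ^ n * Q ^ E₂ := mul_nonneg hC₁n0 hQE0
          nlinarith
  -- applying the difference operators
  have hvln : ∀ (x0 : ℂ) (x : Fin m → Fin d → ℕ → ℂ),
      (∀ ν : ℕ, ν ≤ n → ‖(vseq q P d α' s x0 x ν)‖ ≤ Mv) →
      ‖(vln q P d α' s x0 x l n)‖ ≤ (1 + A) ^ (l * S) * Mv := by
    intro x0 x hvs
    have hop := boundedOp_bigOp α' s ((q:ℚ):ℂ) l A hA0 hAbig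
    rw [← hS] at hop
    rw [vln]
    apply hop (vext q P d α' s x0 x) (n:ℤ) Mv hMv0
    intro t ht
    have htn : t ≤ n := by
      calc t ≤ l * S := ht
        _ = S * l := Nat.mul_comm _ _
        _ ≤ n := hln
    have h0 : (0:ℤ) ≤ (n:ℤ) - t := by omega
    rw [vext]
    rw [if_pos h0]
    apply hvs
    omega
  -- absolute value of wln
  have hwabs : ∀ (x0 : ℂ) (x : Fin m → Fin d → ℕ → ℂ),
      ‖(wln q P d α' s q₁ q₂ D S x0 x l n)‖ =
        (D:ℝ) ^ n * |(q₁:ℝ)| ^ E₁ * |(q₂:ℝ)| ^ E₂ *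
          ‖(vln q P d α' s x0 x l n)‖ := by
    intro x0 x
    rw [wln, norm_mul, norm_mul, norm_mul, norm_pow, norm_pow, norm_pow,
      Complex.norm_natCast, Complex.norm_intCast, Complex.norm_intCast, hE₁def, hE₂def]
  -- the key scalar inequality
  have hX1 : (1:ℝ) ≤ ((n:ℝ) + S) ^ S * ρ ^ (n + S) := by
    apply mul1
    · rcases Nat.eq_zero_or_pos S with h | h
      · rw [h]; norm_num
      · apply one_le_pow₀
        have h1 : (1:ℝ) ≤ (S:ℝ) := by exact_mod_cast h
        have h2 : (0:ℝ) ≤ (n:ℝ) := Nat.cast_nonneg n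
        linarith
    · exact one_le_pow₀ hρ1
  have hn2 : ((n:ℝ) + 1) ≤ 2 ^ (n+1) := by
    have h : n < 2 ^ n := Nat.lt_two_pow_self
    have : ((n:ℕ):ℝ) + 1 ≤ ((2 ^ n : ℕ) : ℝ) := by exact_mod_cast h
    calc ((n:ℝ) + 1) ≤ ((2 ^ n : ℕ) : ℝ) := this
      _ = 2 ^ n := by push_cast; ring
      _ ≤ 2 ^ (n+1) := by apply pow_le_pow_right₀ <;> norm_num
  have hkey : (D:ℝ) ^ n * (1 + A) ^ (l * S) * (C₁ ^ n + ((n:ℝ) + 1) * U * C₁ ^ n) ≤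
      c₀ ^ (n + 1) := by
    have h₁ : (D:ℝ) ^ n ≤ ((D:ℝ) + 1) ^ (n+1) := by
      calc (D:ℝ) ^ n ≤ ((D:ℝ) + 1) ^ n := pow_le_pow_left₀ (by linarith) (by linarith) _
        _ ≤ ((D:ℝ) + 1) ^ (n+1) := pow_le_pow_right₀ (by linarith) (by omega)
    have h₂ : (1 + A) ^ (l * S) ≤ (1 + A) ^ (n+1) := by
      apply pow_le_pow_right₀ (by linarith)
      have : l * S ≤ n := by rw [Nat.mul_comm]; exact hln
      omega
    have h₃ : C₁ ^ n ≤ (C₁ + 1) ^ (n+1) := by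
      calc C₁ ^ n ≤ (C₁ + 1) ^ n := pow_le_pow_left₀ hC₁0 (by linarith) _
        _ ≤ (C₁ + 1) ^ (n+1) := pow_le_pow_right₀ (by linarith) (by omega)
    have hXb : ((n:ℝ) + S) ^ S * ρ ^ (n + S) ≤
        (2 ^ S : ℝ) ^ (n+1) * ((S:ℝ) + 1) ^ S * (ρ ^ (S+1)) ^ (n+1) := by
      have hb1 : ((n:ℝ) + S) ^ S ≤ (2 ^ (n+1) * ((S:ℝ) + 1)) ^ S := by
        apply pow_le_pow_left₀ (by positivity)
        have hS0 : (0:ℝ) ≤ (S:ℝ) := by positivity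
        nlinarith
      have hb2 : ρ ^ (n + S) ≤ (ρ ^ (S+1)) ^ (n+1) := by
        rw [← pow_mul]
        apply pow_le_pow_right₀ hρ1
        nlinarith [Nat.zero_le (1 * 1 : ℕ), Nat.zero_le (S * n)]
      calc ((n:ℝ) + S) ^ S * ρ ^ (n + S)
          ≤ (2 ^ (n+1) * ((S:ℝ) + 1)) ^ S * (ρ ^ (S+1)) ^ (n+1) := by
            apply mul_le_mul hb1 hb2 (pow_nonneg hρ0 _) (by positivity)
        _ = (2 ^ S : ℝ) ^ (n+1) * ((S:ℝ) + 1) ^ S * (ρ ^ (S+1)) ^ (n+1) := by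
            simp only [mul_pow, ← pow_mul]
            rw [Nat.mul_comm (n+1) S]
    have h₄ : C₁ ^ n + ((n:ℝ) + 1) * U * C₁ ^ n ≤ (C₁ + 1) ^ (n+1) * c₁ ^ (n+1) := by
      have step1 : C₁ ^ n + ((n:ℝ) + 1) * U * C₁ ^ n =
          C₁ ^ n * (1 + ((n:ℝ) + 1) * U) := by ring
      have step2 : 1 + ((n:ℝ) + 1) * U ≤
          ((n:ℝ) + 1) * ((1 + (d:ℝ) * S) * (((n:ℝ) + S) ^ S * ρ ^ (n + S))) := by
        have hdS0 : (0:ℝ) ≤ (d:ℝ) * S := by positivity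
        have hn0 : (0:ℝ) ≤ (n:ℝ) := by positivity
        rw [hUdef]
        have hnX : ((n:ℝ)+1) * 1 ≤ ((n:ℝ)+1) * (((n:ℝ) + S) ^ S * ρ ^ (n + S)) :=
          mul_le_mul_of_nonneg_left hX1 (by positivity)
        nlinarith [hnX]
      have step3 : ((n:ℝ) + 1) * ((1 + (d:ℝ) * S) * (((n:ℝ) + S) ^ S * ρ ^ (n + S))) ≤
          2 ^ (n+1) * ((1 + (d:ℝ) * S) *
            ((2 ^ S : ℝ) ^ (n+1) * ((S:ℝ) + 1) ^ S * (ρ ^ (S+1)) ^ (n+1))) := by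
        have hfac0 : (0:ℝ) ≤ (1 + (d:ℝ) * S) := by positivity
        apply mul_le_mul hn2 _ (mul_nonneg hfac0 (zero_le_one.trans hX1)) (by positivity)
        exact mul_le_mul_of_nonneg_left hXb hfac0
      have step4 : 2 ^ (n+1) * ((1 + (d:ℝ) * S) *
          ((2 ^ S : ℝ) ^ (n+1) * ((S:ℝ) + 1) ^ S * (ρ ^ (S+1)) ^ (n+1))) ≤ c₁ ^ (n+1) := by
        have hdS0' : (0:ℝ) ≤ (d:ℝ) * S := by positivity
        have hS0' : (0:ℝ) ≤ (S:ℝ) := by positivity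
        have ha : (1 + (d:ℝ) * S) ≤ (1 + (d:ℝ) * S) ^ (n+1) :=
          le_self_pow₀ (by linarith) (by omega)
        have hb : ((S:ℝ) + 1) ^ S ≤ (((S:ℝ) + 1) ^ S) ^ (n+1) :=
          le_self_pow₀ (one_le_pow₀ (by linarith)) (by omega)
        calc 2 ^ (n+1) * ((1 + (d:ℝ) * S) *
              ((2 ^ S : ℝ) ^ (n+1) * ((S:ℝ) + 1) ^ S * (ρ ^ (S+1)) ^ (n+1)))
            ≤ 2 ^ (n+1) * ((1 + (d:ℝ) * S) ^ (n+1) *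
              ((2 ^ S : ℝ) ^ (n+1) * (((S:ℝ) + 1) ^ S) ^ (n+1) * (ρ ^ (S+1)) ^ (n+1))) := by
              apply mul_le_mul_of_nonneg_left _ (by positivity)
              apply mul_le_mul ha _ _ (by positivity)
              · apply mul_le_mul_of_nonneg_right _ (pow_nonneg (pow_nonneg hρ0 _) _)
                exact mul_le_mul_of_nonneg_left hb (by positivity)
              · have : (0:ℝ) ≤ (ρ ^ (S+1)) ^ (n+1) := pow_nonneg (pow_nonneg hρ0 _) _
                apply mul_nonneg (mul_nonneg (by positivity) (by positivity)) this
          _ = c₁ ^ (n+1) := by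
            rw [hc₁def]
            exact pow_prod5 2 (1 + (d:ℝ) * S) (2 ^ S) (((S:ℝ) + 1) ^ S) (ρ ^ (S+1)) (n+1)
      calc C₁ ^ n + ((n:ℝ) + 1) * U * C₁ ^ n = C₁ ^ n * (1 + ((n:ℝ) + 1) * U) := step1
        _ ≤ (C₁ + 1) ^ (n+1) * c₁ ^ (n+1) := by
            apply mul_le_mul h₃ (step2.trans (step3.trans step4)) _
              (pow_nonneg (by linarith) _)
            have : (0:ℝ) ≤ ((n:ℝ) + 1) * U := mul_nonneg (by positivity) hU0
            linarith
    calc (D:ℝ) ^ n * (1 + A) ^ (l * S) * (C₁ ^ n + ((n:ℝ) + 1) * U * C₁ ^ n)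
        ≤ ((D:ℝ) + 1) ^ (n+1) * (1 + A) ^ (n+1) * ((C₁ + 1) ^ (n+1) * c₁ ^ (n+1)) := by
          apply mul_le_mul
            (mul_le_mul h₁ h₂ (pow_nonneg (by linarith) _) (pow_nonneg (by linarith) _)) h₄
          · have : (0:ℝ) ≤ ((n:ℝ) + 1) * U * C₁ ^ n :=
              mul_nonneg (mul_nonneg (by positivity) hU0) hC₁n0
            linarith
          · exact mul_nonneg (pow_nonneg (by linarith) _) (pow_nonneg (by linarith) _)
      _ = c₀ ^ (n+1) := by
        rw [hc₀def]
        exact pow_prod4 ((D:ℝ) + 1) (1 + A) (C₁ + 1) c₁ (n+1)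
  -- combine everything into the bound  c₀^{n+1} |q₁|^{E₁+E₂}
  set bound : ℝ := c₀ ^ (n+1) * |(q₁:ℝ)| ^ (E₁ + E₂) with hbounddef
  have hq₁0 : (0:ℝ) < |(q₁:ℝ)| := by linarith
  have hbound0 : 0 ≤ bound := by
    rw [hbounddef]
    exact mul_nonneg (pow_nonneg (by linarith) _) (pow_nonneg (abs_nonneg _) _)
  have hcomb : ∀ (x0 : ℂ) (x : Fin m → Fin d → ℕ → ℂ),
      (∀ ν : ℕ, ν ≤ n → ‖(vseq q P d α' s x0 x ν)‖ ≤ Mv) →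
      ‖(wln q P d α' s q₁ q₂ D S x0 x l n)‖ ≤ bound := by
    intro x0 x hvs
    rw [hwabs]
    have h1 := hvln x0 x hvs
    calc (D:ℝ)^n * |(q₁:ℝ)|^E₁ * |(q₂:ℝ)|^E₂ * ‖(vln q P d α' s x0 x l n)‖
        ≤ (D:ℝ)^n * |(q₁:ℝ)|^E₁ * |(q₂:ℝ)|^E₂ * ((1 + A)^(l*S) * Mv) := by
          apply mul_le_mul_of_nonneg_left h1
          positivity
      _ = ((D:ℝ)^n * (1+A)^(l*S) * (C₁^n + ((n:ℝ)+1)*U*C₁^n)) *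
            (|(q₁:ℝ)|^E₁ * (|(q₂:ℝ)|^E₂ * Q^E₂)) := by rw [hMvdef]; ring
      _ = ((D:ℝ)^n * (1+A)^(l*S) * (C₁^n + ((n:ℝ)+1)*U*C₁^n)) *
            (|(q₁:ℝ)|^E₁ * |(q₁:ℝ)|^E₂) := by rw [← mul_pow, hq12]
      _ ≤ c₀^(n+1) * (|(q₁:ℝ)|^E₁ * |(q₁:ℝ)|^E₂) := by
          apply mul_le_mul_of_nonneg_right hkey
          positivity
      _ = bound := by rw [hbounddef, ← pow_add]
  -- cast identities for the exponents
  have hE₁cast : ((E₁:ℕ):ℝ) = (S:ℝ)*(l:ℝ)*((l:ℝ)+1)/2 := by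
    have h2 : (l*(l+1)/2) * 2 = l*(l+1) :=
      Nat.div_mul_cancel (Nat.even_mul_succ_self l).two_dvd
    have h3 : ((l*(l+1)/2 : ℕ):ℝ) * 2 = (l:ℝ)*((l:ℝ)+1) := by exact_mod_cast h2
    rw [hE₁def]
    push_cast
    rw [show ((l*(l+1)/2:ℕ):ℝ) = (l:ℝ)*((l:ℝ)+1)/2 by linarith]
    ring
  have hE₂cast : ((E₂:ℕ):ℝ) = (d:ℝ)*(n:ℝ)*((n:ℝ)+1)/2 := by
    have h2 : (n*(n+1)/2) * 2 = n*(n+1) :=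
      Nat.div_mul_cancel (Nat.even_mul_succ_self n).two_dvd
    have h3 : ((n*(n+1)/2 : ℕ):ℝ) * 2 = (n:ℝ)*((n:ℝ)+1) := by exact_mod_cast h2
    rw [hE₂def]
    push_cast
    rw [show ((n*(n+1)/2:ℕ):ℝ) = (n:ℝ)*((n:ℝ)+1)/2 by linarith]
    ring
  -- compare the bound with the right-hand side
  have hfinal : bound ≤ |(q₁:ℝ)| ^ ((d:ℝ)*(n:ℝ)^2/2 + (S:ℝ)*(l:ℝ)^2/2 +
      (Lg + d + S + 1)*((n:ℝ)+1)) := by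
    have hc₀pos : (0:ℝ) < c₀ := by linarith
    have hrw : c₀ ^ (n+1) = |(q₁:ℝ)| ^ (Lg * ((n:ℝ)+1)) := by
      have e1 : c₀ = |(q₁:ℝ)| ^ (Real.logb |(q₁:ℝ)| c₀) :=
        (Real.rpow_logb hq₁0 (by linarith) hc₀pos).symm
      rw [hLgdef]
      calc c₀ ^ (n+1) = (|(q₁:ℝ)| ^ (Real.logb |(q₁:ℝ)| c₀)) ^ (n+1) := by rw [← e1]
        _ = |(q₁:ℝ)| ^ (Real.logb |(q₁:ℝ)| c₀ * (((n+1 : ℕ)):ℝ)) := by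
            rw [← Real.rpow_natCast (|(q₁:ℝ)| ^ (Real.logb |(q₁:ℝ)| c₀)) (n+1),
              ← Real.rpow_mul (le_of_lt hq₁0)]
        _ = |(q₁:ℝ)| ^ (Real.logb |(q₁:ℝ)| c₀ * ((n:ℝ)+1)) := by
            congr 1
            push_cast
            ring
    have hrw2 : |(q₁:ℝ)| ^ ((E₁ + E₂ : ℕ)) = |(q₁:ℝ)| ^ (((E₁ + E₂ : ℕ)):ℝ) :=
      (Real.rpow_natCast _ _).symm
    rw [hbounddef, hrw, hrw2, ← Real.rpow_add hq₁0]
    apply Real.rpow_le_rpow_of_exponent_le (le_of_lt hq₁R)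
    rw [Nat.cast_add, hE₁cast, hE₂cast]
    have hlnR : (S:ℝ)*(l:ℝ) ≤ (n:ℝ) := by exact_mod_cast hln
    have hn0 : (0:ℝ) ≤ (n:ℝ) := Nat.cast_nonneg n
    have hl0 : (0:ℝ) ≤ (l:ℝ) := Nat.cast_nonneg l
    have hd0 : (0:ℝ) ≤ (d:ℝ) := Nat.cast_nonneg d
    have hS0 : (0:ℝ) ≤ (S:ℝ) := Nat.cast_nonneg S
    linarith [hlnR, mul_nonneg hd0 hn0, mul_nonneg hS0 hn0, mul_nonneg hd0 (mul_nonneg hn0 hn0), mul_nonneg hS0 (mul_nonneg hl0 hl0)]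
  -- conclude
  apply max_le
  · exact (hcomb 1 0 hv1).trans hfinal
  · have hsup : ((Finset.univ.sup fun j : Fin m => Finset.univ.sup fun k : Fin d =>
        (Finset.range (s j)).sup fun σ =>
          ‖wln q P d α' s q₁ q₂ D S 0 (basisVec d j k σ) l n‖₊ : NNReal) : ℝ) ≤ bound := by
      rw [← Real.coe_toNNReal bound hbound0, NNReal.coe_le_coe]
      apply Finset.sup_le
      intro j _
      apply Finset.sup_le
      intro k _
      apply Finset.sup_le
      intro σ hσ
      rw [← NNReal.coe_le_coe, Real.coe_toNNReal _ hbound0, coe_nnnorm]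
      apply hcomb 0 (basisVec d j k σ)
      apply hv2
      intro j' k' σ'
      rw [basisVec]
      split <;> simp
    exact hsup.trans hfinal
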